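/- arXiv:2504.06795 — 5 statements merged into one kernel-verified Lean document; each statement's English description precedes it below -/
import Mathlib

section
/- Let $d\ge 1$, let $\mathbf{w}=(w_1,\dots,w_d)$ be a weight vector with $w_1\ge\dots\ge w_d>0$ and $\sum w_i = 1$, let $b>1$ and $\beta = b^{-(1+w_1)}$. Let $t$ be such that $w_1=\dots=w_t>w_{t+1}$ (with $w_{d+1}:=0$). For $y\in\mathbb{R}$ define $a_y=\mathrm{diag}(b^y, b^{-w_1 y},\dots,b^{-w_d y})$ and $d_y=\mathrm{diag}(\beta^{ty/(d+1)}, \beta^{-(d+1-t)y/(d+1)},\dots,\beta^{-(d+1-t)y/(d+1)}, \beta^{ty/(d+1)},\dots,\beta^{ty/(d+1)})$ (with $t$ entries $\beta^{-(d+1-t)y/(d+1)}$ and $d-t$ entries $\beta^{ty/(d+1)}$ after the first). Fix $\eta>0$, $s\ge 1$, a ball $B_0\subset\mathbb{R}^d$, and $n\in\mathbb{N}$. Suppose $\mathbf{x}\in B_0$ satisfies $d_1 a_{n'+s} u_{\mathbf{x}}\mathbb{Z}^{d+1}\in K_{\beta^\eta}$ for all $1\le n'\le n-1$, where $u_{\mathbf{x}}$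 is the upper triangular unipotent matrix with first row $(1,\mathbf{x}^T)$ and identity below. Then for all integers $0<n'<n$, $a_{n'}u_{\mathbf{x}}\mathbb{Z}^{d+1}\in K_{\xi}$ where $\xi=\beta^{\eta+\frac{s}{1+w_1}+\frac{d+1-t}{d+1}}$. -/
/-- The diagonal flow `a_y = diag(b^y, b^{-w₁ y}, …, b^{-w_d y})`. -/
noncomputable def amat (d : ℕ) (b : ℝ) (w : Fin d → ℝ) (y : ℝ) :
    Matrix (Fin (d+1)) (Fin (d+1)) ℝ :=
  Matrix.diagonal (fun i => if h : i.val = 0 then b ^ y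
    else b ^ (-(w ⟨i.val - 1, by have := i.isLt; omega⟩) * y))

/-- The diagonal matrix
`d_y = diag(β^{ty/(d+1)}, β^{-(d+1-t)y/(d+1)} (t times), β^{ty/(d+1)} (d-t times))`. -/
noncomputable def dmat (d t : ℕ) (β : ℝ) (y : ℝ) : Matrix (Fin (d+1)) (Fin (d+1)) ℝ :=
  Matrix.diagonal (fun i => if i.val = 0 then β ^ ((t : ℝ) * y / ((d : ℝ) + 1))
    else if i.val ≤ t then β ^ (-(((d : ℝ) + 1 - t) * y / ((d : ℝ) + 1)))
    else β ^ ((t : ℝ) * y / ((d : ℝ) + 1)))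

/-- The unipotent matrix `u_x` with first row `(1, xᵀ)` and identity below. -/
def umat (d : ℕ) (x : Fin d → ℝ) : Matrix (Fin (d+1)) (Fin (d+1)) ℝ :=
  fun i j => if i.val = 0 then
      (if h : j.val = 0 then 1 else x ⟨j.val - 1, by have := j.isLt; omega⟩)
    else if i = j then 1 else 0

/-- `g ℤ^{d+1} ∈ K_ε`: every nonzero vector of the lattice `g ℤ^{d+1}` has Euclidean norm
at least `ε`. -/
def inK (d : ℕ) (g : Matrix (Fin (d+1)) (Fin (d+1)) ℝ) (ε : ℝ) : Prop :=
  ∀ v : Fin (d+1) → ℤ, v ≠ 0 →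
    ε ≤ Real.sqrt (∑ i, (g.mulVec (fun j => (v j : ℝ)) i) ^ 2)

/-- If `d₁ a_{n'+s} u_x ℤ^{d+1} ∈ K_{β^η}` for all `1 ≤ n' ≤ n-1`, then
`a_{n'} u_x ℤ^{d+1} ∈ K_ξ` for all `0 < n' < n`, with
`ξ = β^{η + s/(1+w₁) + (d+1-t)/(d+1)}`. -/
theorem stmt_4 (d : ℕ) (hd : 0 < d) (w : Fin d → ℝ)
    (hwmono : ∀ i j : Fin d, i ≤ j → w j ≤ w i) (hwpos : ∀ i, 0 < w i)
    (hwsum : ∑ i, w i = 1)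
    (b : ℝ) (hb : 1 < b) (β : ℝ) (hβ : β = b ^ (-(1 + w ⟨0, hd⟩)))
    (t : ℕ) (ht1 : 1 ≤ t) (ht2 : t ≤ d)
    (hteq : ∀ i : Fin d, i.val < t → w i = w ⟨0, hd⟩)
    (htlt : ∀ h' : t < d, w ⟨t, h'⟩ < w ⟨0, hd⟩)
    (η : ℝ) (hη : 0 < η) (s : ℕ) (hs : 1 ≤ s)
    (x₀ : Fin d → ℝ) (r₀ : ℝ) (hr₀ : 0 < r₀) (x : Fin d → ℝ)
    (hx : x ∈ Metric.closedBall x₀ r₀) (n : ℕ)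
    (hyp : ∀ n' : ℕ, 1 ≤ n' → n' < n →
      inK d ((dmat d t β 1) * (amat d b w ((n' : ℝ) + s)) * (umat d x)) (β ^ η)) :
    ∀ n' : ℕ, 0 < n' → n' < n →
      inK d ((amat d b w (n' : ℝ)) * (umat d x))
        (β ^ (η + (s : ℝ) / (1 + w ⟨0, hd⟩) + ((d : ℝ) + 1 - t) / ((d : ℝ) + 1))) := by
  intro n' hn'0 hn'n v hv
  have hb0 : (0:ℝ) < b := lt_trans one_pos hb
  set W := w ⟨0, hd⟩ with hW_def
  have hW : 0 < W := hwpos _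
  have hW1 : (1:ℝ) + W ≠ 0 := by positivity
  have hd1 : (0:ℝ) < (d:ℝ) + 1 := by positivity
  have hd1' : ((d:ℝ) + 1) ≠ 0 := ne_of_gt hd1
  have hβ0 : 0 < β := hβ ▸ Real.rpow_pos_of_pos hb0 _
  have hs0 : (0:ℝ) ≤ (s:ℝ) := Nat.cast_nonneg s
  set e : ℝ := -(1 + W) with he_def
  have he : e < 0 := by simp only [he_def]; linarith
  have hβb : ∀ z : ℝ, β ^ z = b ^ (e * z) := by
    intro z
    rw [hβ, ← Real.rpow_mul hb0.le]
  -- the comparison constant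
  set c : ℝ := β ^ ((s:ℝ) / (1 + W) + ((d:ℝ) + 1 - t) / ((d:ℝ) + 1)) with hc_def
  have hc0 : 0 < c := Real.rpow_pos_of_pos hβ0 _
  have key := hyp n' hn'0 hn'n v hv
  set y : Fin (d+1) → ℝ := (umat d x).mulVec (fun j => (v j : ℝ)) with hy
  -- the diagonal entries
  set pe : Fin (d+1) → ℝ := fun i => if h : i.val = 0 then b ^ ((n':ℝ))
    else b ^ (-(w ⟨i.val - 1, by have := i.isLt; omega⟩) * ((n':ℝ))) with hpe
  set qe : Fin (d+1) → ℝ := fun i =>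
    (if i.val = 0 then β ^ ((t : ℝ) * 1 / ((d : ℝ) + 1))
      else if i.val ≤ t then β ^ (-(((d : ℝ) + 1 - t) * 1 / ((d : ℝ) + 1)))
      else β ^ ((t : ℝ) * 1 / ((d : ℝ) + 1))) *
    (if h : i.val = 0 then b ^ ((n':ℝ) + s)
      else b ^ (-(w ⟨i.val - 1, by have := i.isLt; omega⟩) * ((n':ℝ) + s))) with hqe
  have hqe0 : ∀ i, 0 < qe i := by
    intro i
    simp only [hqe]
    apply mul_pos
    · split_ifs <;> exact Real.rpow_pos_of_pos hβ0 _
    · split_ifs <;> exact Real.rpow_pos_of_pos hb0 _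
  -- rewrite both mulVecs
  have hmv1 : ∀ i, ((amat d b w (n' : ℝ)) * (umat d x)).mulVec (fun j => (v j : ℝ)) i
      = pe i * y i := by
    intro i
    rw [← Matrix.mulVec_mulVec, amat, Matrix.mulVec_diagonal]
  have hmv2 : ∀ i, ((dmat d t β 1) * (amat d b w ((n' : ℝ) + s)) * (umat d x)).mulVec
      (fun j => (v j : ℝ)) i = qe i * y i := by
    intro i
    rw [← Matrix.mulVec_mulVec, ← Matrix.mulVec_mulVec, dmat, amat,
      Matrix.mulVec_diagonal, Matrix.mulVec_diagonal, hqe, mul_assoc]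
  -- pointwise comparison c * qe i ≤ pe i
  have hpt : ∀ i, c * qe i ≤ pe i := by
    intro i
    have hexp : ∀ α γ : ℝ, α ≤ γ → b ^ α ≤ b ^ γ := fun α γ h =>
      Real.rpow_le_rpow_left_iff hb |>.mpr h
    rcases Nat.eq_zero_or_pos i.val with hi0 | hipos
    · simp only [hqe, hpe, hc_def]
      rw [if_pos hi0, dif_pos hi0, dif_pos hi0]
      rw [hβb, hβb, ← Real.rpow_add hb0, ← Real.rpow_add hb0]
      apply hexp
      have hident : e * ((s:ℝ) / (1 + W) + ((d:ℝ) + 1 - t) / ((d:ℝ) + 1))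
          + (e * ((t:ℝ) * 1 / ((d:ℝ) + 1)) + ((n':ℝ) + s)) = e + (n':ℝ) := by
        simp only [he_def]; field_simp; ring
      linarith
    · have hi0 : i.val ≠ 0 := Nat.pos_iff_ne_zero.mp hipos
      set w' : ℝ := w ⟨i.val - 1, by have := i.isLt; omega⟩ with hw'
      have hw'pos : 0 < w' := hwpos _
      have hw'le : w' ≤ W := by
        apply hwmono
        exact Fin.mk_le_mk.mpr (Nat.zero_le _)
      rcases le_or_gt i.val t with hit | hit
      · simp only [hqe, hpe, hc_def]
        rw [if_neg hi0, dif_neg hi0, dif_neg hi0, if_pos hit]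
        rw [hβb, hβb, ← Real.rpow_add hb0, ← Real.rpow_add hb0]
        apply hexp
        have hident : e * ((s:ℝ) / (1 + W) + ((d:ℝ) + 1 - t) / ((d:ℝ) + 1))
            + (e * (-(((d:ℝ) + 1 - t) * 1 / ((d:ℝ) + 1))) + (-w' * ((n':ℝ) + s)))
            = -(s:ℝ) - w' * (n':ℝ) - w' * s := by
          simp only [he_def]; field_simp; ring
        have : 0 ≤ w' * s := mul_nonneg hw'pos.le hs0
        linarith
      · simp only [hqe, hpe, hc_def]
        rw [if_neg hi0, dif_neg hi0, dif_neg hi0, if_neg (by omega : ¬ i.val ≤ t)]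
        rw [hβb, hβb, ← Real.rpow_add hb0, ← Real.rpow_add hb0]
        apply hexp
        have hident : e * ((s:ℝ) / (1 + W) + ((d:ℝ) + 1 - t) / ((d:ℝ) + 1))
            + (e * ((t:ℝ) * 1 / ((d:ℝ) + 1)) + (-w' * ((n':ℝ) + s)))
            = -(s:ℝ) + e - w' * (n':ℝ) - w' * s := by
          simp only [he_def]; field_simp; ring
        have : 0 ≤ w' * s := mul_nonneg hw'pos.le hs0
        linarith
  -- sum comparison
  have hsum : c ^ 2 * ∑ i, (qe i * y i) ^ 2 ≤ ∑ i, (pe i * y i) ^ 2 := by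
    rw [Finset.mul_sum]
    apply Finset.sum_le_sum
    intro i _
    have h1 : (c * qe i) ^ 2 ≤ (pe i) ^ 2 := by
      exact pow_le_pow_left₀ (mul_pos hc0 (hqe0 i)).le (hpt i) 2
    calc c ^ 2 * (qe i * y i) ^ 2 = (c * qe i) ^ 2 * (y i) ^ 2 := by ring
      _ ≤ (pe i) ^ 2 * (y i) ^ 2 := mul_le_mul_of_nonneg_right h1 (sq_nonneg _)
      _ = (pe i * y i) ^ 2 := by ring
  -- conclude
  have hgoal : β ^ (η + (s:ℝ) / (1 + W) + ((d:ℝ) + 1 - t) / ((d:ℝ) + 1)) = β ^ η * c := by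
    rw [hc_def, ← Real.rpow_add hβ0]; ring_nf
  simp only [hmv1] at *
  simp only [hmv2] at key
  rw [hgoal]
  calc β ^ η * c ≤ Real.sqrt (∑ i, (qe i * y i) ^ 2) * c :=
        mul_le_mul_of_nonneg_right key hc0.le
    _ = Real.sqrt (c ^ 2 * ∑ i, (qe i * y i) ^ 2) := by
        rw [Real.sqrt_mul (by positivity), Real.sqrt_sq hc0.le]; ring
    _ ≤ Real.sqrt (∑ i, (pe i * y i) ^ 2) := Real.sqrt_le_sqrt hsum
end

section
/- Let $d\ge 1$, $\mathbf{w}$ a weight in $\mathbb{R}^d$ with $w_1\ge\dots\ge w_d>0$, $\sum w_i=1$, $b>1$, $k_1>0$, $\lambda_1\in\mathbb{N}$, $n\in\mathbb{N}$ with $n>\lambda_1$, and $\mathbf{x}\in\mathbb{R}^d$. Suppose that for every real $H$ with $1\le H<b^{n-\lambda_1}$ there is no nonzero integer point $(z_0,\dots,z_d)$ with $|z_0+\sum_{i=1}^d z_i x_i|\le k_1 H^{-1}$ and $|z_i|\le H^{w_i}$ for $1\le i\le d$. Then for every real $Q$ with $1\le Q<b^{n-\lambda_1}$ there is no nonzero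 integer point $(m,p_1,\dots,p_d)$ satisfying $|m|\le Q$ and $|m x_i - p_i| < \frac{k_1}{d}Q^{-w_i}$ for all $1\le i\le d$. -/
/-!
Let `(m, p)` be a nonzero solution of the simultaneous system. If `m ≠ 0`, the box principle
applied to the residues of `∑ pᵢ vᵢ` modulo `|m|`, for `0 ≤ vᵢ ≤ |m|^{wᵢ}`, gives a nonzero `v` with
`|vᵢ| ≤ |m|^{wᵢ}` and `∑ pᵢ vᵢ = m c` (there are more boxes than residues because
`∏ |m|^{wᵢ} = |m|`). Then `m (-c + ∑ vᵢ xᵢ) = ∑ vᵢ (m xᵢ - pᵢ)`, each term of which is at most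
`k₁ / d`, so `(-c, v)` solves the dual system with `H = |m|`. If `m = 0`, the dual point
`(1, 0, …, 0)` with `H = 1` forces `k₁ < 1`, and then every `pᵢ` vanishes.
-/

open Finset

section

variable {ι : Type*} [Fintype ι]

theorem exists_ne_zero_abs_le_dvd_sum_mul (M : ℕ) [NeZero M] (N : ι → ℕ)
    (hN : M < ∏ i, (N i + 1)) (p : ι → ℤ) :
    ∃ v : ι → ℤ, v ≠ 0 ∧ (∀ i, |v i| ≤ N i) ∧ (M : ℤ) ∣ ∑ i, p i * v i := by
  classical
  have hcard : Fintype.card (ZMod M) < Fintype.card (∀ i, Fin (N i + 1)) := by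
    simpa only [ZMod.card, Fintype.card_pi, Fintype.card_fin] using hN
  obtain ⟨u, u', hne, heq⟩ := Fintype.exists_ne_map_eq_of_card_lt
    (fun u : ∀ i, Fin (N i + 1) => ((∑ i, p i * (u i : ℤ) : ℤ) : ZMod M)) hcard
  refine ⟨fun i => (u i : ℤ) - u' i, fun h => hne (funext fun i => Fin.ext ?_), fun i => ?_, ?_⟩
  · simpa [sub_eq_zero] using congrFun h i
  · have := (u i).is_lt
    have := (u' i).is_lt
    show |(u i : ℤ) - u' i| ≤ N i
    rw [abs_le]
    constructor <;> omega
  · rw [← ZMod.intCast_zmod_eq_zero_iff_dvd]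
    simp only [mul_sub, sum_sub_distrib, Int.cast_sub]
    exact sub_eq_zero.mpr heq

theorem lt_prod_floor_rpow_add_one {x : ℝ} (hx : 0 < x) {w : ι → ℝ} (hw : ∑ i, w i = 1) :
    x < ∏ i, ((⌊x ^ w i⌋₊ : ℝ) + 1) := by
  have hι : (univ : Finset ι).Nonempty := nonempty_of_sum_ne_zero (hw ▸ one_ne_zero)
  calc x = ∏ i, x ^ w i := by rw [← Real.rpow_sum_of_pos hx, hw, Real.rpow_one]
    _ < ∏ i, ((⌊x ^ w i⌋₊ : ℝ) + 1) :=
      prod_lt_prod_of_nonempty (fun i _ => by positivity)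
        (fun i _ => Nat.lt_floor_add_one _) hι

theorem exists_ne_zero_abs_le_rpow_dvd_sum_mul {M : ℕ} (hM : 0 < M) {w : ι → ℝ}
    (hw : ∑ i, w i = 1) (p : ι → ℤ) :
    ∃ v : ι → ℤ, v ≠ 0 ∧ (∀ i, |(v i : ℝ)| ≤ (M : ℝ) ^ w i) ∧ (M : ℤ) ∣ ∑ i, p i * v i := by
  have : NeZero M := ⟨hM.ne'⟩
  have hN : M < ∏ i, (⌊(M : ℝ) ^ w i⌋₊ + 1) := by
    exact_mod_cast lt_prod_floor_rpow_add_one (Nat.cast_pos.mpr hM) hw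
  obtain ⟨v, hv, hvN, hdvd⟩ := exists_ne_zero_abs_le_dvd_sum_mul M _ hN p
  refine ⟨v, hv, fun i => ?_, hdvd⟩
  calc |(v i : ℝ)| ≤ ⌊(M : ℝ) ^ w i⌋₊ := by exact_mod_cast hvN i
    _ ≤ (M : ℝ) ^ w i := Nat.floor_le (by positivity)

theorem mul_neg_add_sum_mul_eq_sum_mul_sub {m c : ℤ} {p v : ι → ℤ}
    (hc : ∑ i, p i * v i = m * c) (x : ι → ℝ) :
    (m : ℝ) * (-c + ∑ i, v i * x i) = ∑ i, (v i : ℝ) * (m * x i - p i) := by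
  have hc' : ∑ i, (p i : ℝ) * v i = m * c := by exact_mod_cast hc
  have hsum : ∑ i, (v i : ℝ) * (m * x i - p i) = m * ∑ i, v i * x i - ∑ i, (p i : ℝ) * v i := by
    rw [mul_sum, ← sum_sub_distrib]
    exact sum_congr rfl fun i _ => by ring
  rw [hsum, hc']
  ring

theorem abs_mul_abs_le_of_le_rpow {a e H Q w ε : ℝ} (hw : 0 ≤ w) (hH : 0 < H) (hHQ : H ≤ Q)
    (ha : |a| ≤ H ^ w) (he : |e| ≤ ε * Q ^ (-w)) : |a| * |e| ≤ ε := by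
  have hQ : 0 < Q := hH.trans_le hHQ
  calc |a| * |e| ≤ H ^ w * (ε * Q ^ (-w)) :=
        mul_le_mul ha he (abs_nonneg e) (by positivity)
    _ ≤ Q ^ w * (ε * Q ^ (-w)) :=
        mul_le_mul_of_nonneg_right (Real.rpow_le_rpow hH.le hHQ hw) ((abs_nonneg e).trans he)
    _ = ε := by rw [mul_left_comm, ← Real.rpow_add hQ, add_neg_cancel, Real.rpow_zero, mul_one]

theorem exists_dual_of_simultaneous {x w : ι → ℝ} (hw : ∀ i, 0 ≤ w i) (hwsum : ∑ i, w i = 1)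
    {Q ε : ℝ} {m : ℤ} (hm : m ≠ 0) (hmQ : |(m : ℝ)| ≤ Q) {p : ι → ℤ}
    (hp : ∀ i, |m * x i - p i| ≤ ε * Q ^ (-w i)) :
    ∃ c : ℤ, ∃ v : ι → ℤ, v ≠ 0 ∧
      |(c : ℝ) + ∑ i, v i * x i| ≤ Fintype.card ι * ε / |(m : ℝ)| ∧
      ∀ i, |(v i : ℝ)| ≤ |(m : ℝ)| ^ w i := by
  have hH : 0 < |(m : ℝ)| := abs_pos.mpr (Int.cast_ne_zero.mpr hm)
  obtain ⟨v, hv, hvH, hdvd⟩ := exists_ne_zero_abs_le_rpow_dvd_sum_mul (Int.natAbs_pos.mpr hm) hwsum p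
  rw [Nat.cast_natAbs, Int.cast_abs] at hvH
  obtain ⟨c, hc⟩ := Int.natAbs_dvd.mp hdvd
  refine ⟨-c, v, hv, ?_, hvH⟩
  rw [le_div_iff₀ hH, mul_comm, ← abs_mul, Int.cast_neg, mul_neg_add_sum_mul_eq_sum_mul_sub hc]
  calc |∑ i, (v i : ℝ) * (m * x i - p i)| ≤ ∑ i, |(v i : ℝ) * (m * x i - p i)| :=
        abs_sum_le_sum_abs _ _
    _ ≤ ∑ _i : ι, ε := sum_le_sum fun i _ => by
        rw [abs_mul]; exact abs_mul_abs_le_of_le_rpow (hw i) hH hmQ (hvH i) (hp i)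
    _ = Fintype.card ι * ε := by simp

end

theorem stmt_6_general (d : ℕ) (hd : 0 < d) (w : Fin d → ℝ)
    (hwpos : ∀ i, 0 < w i)
    (hwsum : ∑ i, w i = 1)
    (b : ℝ) (k₁ : ℝ) (hk₁ : 0 < k₁) (lam₁ n : ℕ)
    (x : Fin d → ℝ)
    (hdual : ∀ H : ℝ, 1 ≤ H → H < b ^ ((n : ℝ) - lam₁) →
      ¬ ∃ z : Fin (d+1) → ℤ, z ≠ 0 ∧
        |(z 0 : ℝ) + ∑ i : Fin d, (z i.succ : ℝ) * x i| ≤ k₁ / H ∧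
        ∀ i : Fin d, |(z i.succ : ℝ)| ≤ H ^ (w i)) :
    ∀ Q : ℝ, 1 ≤ Q → Q < b ^ ((n : ℝ) - lam₁) →
      ¬ ∃ z : Fin (d+1) → ℤ, z ≠ 0 ∧
        |(z 0 : ℝ)| ≤ Q ∧
        ∀ i : Fin d, |(z 0 : ℝ) * x i - (z i.succ : ℝ)| < (k₁ / d) * Q ^ (-(w i)) := by
  rintro Q hQ1 hQb ⟨z, hz, hz0, hzi⟩
  have hk₁1 : k₁ < 1 := by
    by_contra! h
    exact hdual 1 le_rfl (hQ1.trans_lt hQb)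
      ⟨Pi.single 0 1, by simp, by simpa using h, fun i => by simp⟩
  by_cases hm : z 0 = 0
  · have hsmall : ∀ i, k₁ / d * Q ^ (-(w i)) < 1 := fun i => calc
      k₁ / d * Q ^ (-(w i)) ≤ k₁ / d * 1 := mul_le_mul_of_nonneg_left
          (Real.rpow_le_one_of_one_le_of_nonpos hQ1 (neg_nonpos.mpr (hwpos i).le)) (by positivity)
      _ ≤ k₁ := by rw [mul_one]; exact div_le_self hk₁.le (by exact_mod_cast hd)
      _ < 1 := hk₁1
    refine hz (funext fun j => Fin.cases hm (fun i => ?_) j)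
    have hzi := (hzi i).trans (hsmall i)
    rw [hm, Int.cast_zero, zero_mul, zero_sub, abs_neg] at hzi
    exact Int.abs_lt_one_iff.mp (by exact_mod_cast hzi)
  · obtain ⟨c, v, hv, hform, hvH⟩ :=
      exists_dual_of_simultaneous (fun i => (hwpos i).le) hwsum hm hz0 fun i => (hzi i).le
    refine hdual _ (by exact_mod_cast Int.one_le_abs hm) (hz0.trans_lt hQb)
      ⟨Fin.cons c v, fun h => hv (funext fun i => by simpa using congrFun h i.succ), ?_, ?_⟩
    · rwa [Fintype.card_fin, mul_div_cancel₀ _ (by exact_mod_cast hd.ne' : (d : ℝ) ≠ 0)] at hform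
    · simpa using hvH

/-- Transference: nonexistence of small solutions to the dual linear-form system implies
nonexistence of small solutions to the simultaneous system. -/
theorem stmt_6 (d : ℕ) (hd : 0 < d) (w : Fin d → ℝ)
    (hwmono : ∀ i j : Fin d, i ≤ j → w j ≤ w i) (hwpos : ∀ i, 0 < w i)
    (hwsum : ∑ i, w i = 1)
    (b : ℝ) (hb : 1 < b) (k₁ : ℝ) (hk₁ : 0 < k₁) (lam₁ n : ℕ) (hn : lam₁ < n)
    (x : Fin d → ℝ)
    (hdual : ∀ H : ℝ, 1 ≤ H → H < b ^ ((n : ℝ) - lam₁) →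
      ¬ ∃ z : Fin (d+1) → ℤ, z ≠ 0 ∧
        |(z 0 : ℝ) + ∑ i : Fin d, (z i.succ : ℝ) * x i| ≤ k₁ / H ∧
        ∀ i : Fin d, |(z i.succ : ℝ)| ≤ H ^ (w i)) :
    ∀ Q : ℝ, 1 ≤ Q → Q < b ^ ((n : ℝ) - lam₁) →
      ¬ ∃ z : Fin (d+1) → ℤ, z ≠ 0 ∧
        |(z 0 : ℝ)| ≤ Q ∧
        ∀ i : Fin d, |(z 0 : ℝ) * x i - (z i.succ : ℝ)| < (k₁ / d) * Q ^ (-(w i)) :=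
  stmt_6_general d hd w hwpos hwsum b k₁ hk₁ lam₁ n x hdual
end

section
/- Let $g_t^\star=\mathrm{diag}(e^t, e^{-w_1 t},\dots,e^{-w_d t}, e^{-w_{d+1}t},\dots,e^{-w_n t})$ where $\mathbf{w}=(w_1,\dots,w_n)$ is a weight vector with $w_1=\dots=w_d=w_{\max}:=\max_i w_i$, and let $g_{c,k}^\star=\mathrm{diag}(c,\underbrace{c^{-(m+1)/d}k^{m/d},\dots}_{d},\underbrace{c/k,\dots}_{m})$ with $m=n-d$, $k\in\mathbb{N}$, $0<c<1$. Let $\mathbf{f}(\mathbf{x})=(\mathbf{x},f_1(\mathbf{x}),\dots,f_m(\mathbf{x}))$ with Jacobian $J(\mathbf{x})$ of $(f_1,\dots,f_m)$, and let $u_1^\star(\mathbf{x})$ be the block upper-triangular matrix with rows $(1, -\mathbf{x}, -f(\mathbf{x}))$, $(0, I_d, J(\mathbf{x}))$, $(0,0,I_m)$. Suppose $\mathbf{x}$ is such that the lattice $g_{c,k}^\star g_t^\star u_1^\star(\mathbf{x})\mathbb{Z}^{n+1}$ contains a nonzero vector of sup-norm less than $c$ for some $t$. Then there exists a nonzero integer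 vector $(a_0,\mathbf{a})\in\mathbb{Z}\times\mathbb{Z}^n$ with $|a_0+\mathbf{a}\cdot\mathbf{f}(\mathbf{x})|\le e^{-t}$, $\|\nabla f(\mathbf{x})\mathbf{a}^T\|_\infty \le c\, c^{(m+1)/d} k^{-m/d} e^{w_{\max}t}$ (where the gradient part refers to the first $d$ coordinates of $\mathbf{a}$ combined with $J(\mathbf{x})$ applied to the last $m$ coordinates), and $|a_i|\le k e^{w_i t}$ for $d+1\le i\le n$. -/
/-- The dual diagonal flow `g_t^⋆ = diag(e^t, e^{-w₁t},…,e^{-w_n t})` (`n = d + m`). -/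
noncomputable def gstarT (d m : ℕ) (w : Fin (d+m) → ℝ) (t : ℝ) :
    Matrix (Fin (d+m+1)) (Fin (d+m+1)) ℝ :=
  Matrix.diagonal (fun i => if h : i.val = 0 then Real.exp t
    else Real.exp (-(w ⟨i.val - 1, by have := i.isLt; omega⟩) * t))

/-- The dual scaling matrix
`g_{c,k}^⋆ = diag(c, c^{-(m+1)/d} k^{m/d} (d times), c/k (m times))`. -/
noncomputable def gstarCK (d m k : ℕ) (c : ℝ) : Matrix (Fin (d+m+1)) (Fin (d+m+1)) ℝ :=
  Matrix.diagonal (fun i => if i.val = 0 then c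
    else if i.val ≤ d then c ^ (-(((m : ℝ) + 1) / d)) * (k : ℝ) ^ ((m : ℝ) / d)
    else c / k)

/-- The dual unipotent matrix `u₁^⋆(x)` with rows `(1, -x, -f(x))`, `(0, I_d, J(x))`,
`(0, 0, I_m)`. -/
noncomputable def u1star (d m : ℕ) (x : Fin d → ℝ) (fval : Fin m → ℝ)
    (J : Fin d → Fin m → ℝ) : Matrix (Fin (d+m+1)) (Fin (d+m+1)) ℝ :=
  fun i j =>
    if hi : i.val = 0 then
      (if hj : j.val = 0 then 1
        else if hj' : j.val ≤ d then -x ⟨j.val - 1, by omega⟩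
        else -fval ⟨j.val - 1 - d, by have := j.isLt; omega⟩)
    else if hi' : i.val ≤ d then
      (if i.val = j.val then 1
        else if hj' : d < j.val then
          J ⟨i.val - 1, by omega⟩ ⟨j.val - 1 - d, by have := j.isLt; omega⟩
        else 0)
    else (if i.val = j.val then 1 else 0)

/-!
The matrices `g_{c,k}^⋆` and `g_t^⋆` are diagonal, so for `y = u₁^⋆(x) v` the hypothesis says
`|Dᵢ yᵢ| < c`, i.e. `|yᵢ| < c / Dᵢ`, for the diagonal entries `Dᵢ` of `g_{c,k}^⋆ g_t^⋆`. The
coordinates of `y` are the three linear forms of the conclusion, evaluated at `v` with its last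
`n` coordinates negated, and the bounds `c / Dᵢ` are `e^{-t}`,
`c · c^{(m+1)/d} k^{-m/d} e^{w_max t}` and `k e^{wᵢ t}`.
-/

open Matrix Fin

lemma abs_lt_div_of_abs_mul_lt {A S c : ℝ} (hA : 0 < A) (h : |A * S| < c) : |S| < c / A := by
  rwa [lt_div_iff₀ hA, mul_comm, ← abs_of_pos hA, ← abs_mul]

lemma succ_castAdd_eq_mk {d : ℕ} (m : ℕ) (i : Fin d) :
    (castAdd m i).succ = ⟨i.val + 1, by omega⟩ := rfl

lemma succ_natAdd_eq_mk (d : ℕ) {m : ℕ} (j : Fin m) :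
    (natAdd d j).succ = ⟨d + j.val + 1, by omega⟩ := rfl

section u1star

variable {d m : ℕ} (x : Fin d → ℝ) (fval : Fin m → ℝ) (J : Fin d → Fin m → ℝ)
  (v : Fin (d+m+1) → ℝ)

lemma u1star_mulVec_zero :
    (u1star d m x fval J *ᵥ v) 0
      = v 0 - ∑ i, v (castAdd m i).succ * x i - ∑ j, v (natAdd d j).succ * fval j := by
  simp [mulVec, dotProduct, Fin.sum_univ_succ, Fin.sum_univ_add, u1star, mul_comm]
  ring

lemma u1star_mulVec_succ_castAdd (i : Fin d) :
    (u1star d m x fval J *ᵥ v) (castAdd m i).succ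
      = v (castAdd m i).succ + ∑ j, J i j * v (natAdd d j).succ := by
  have hlt (i' : Fin d) : ¬ d ≤ i'.val := not_le.mpr i'.isLt
  have hne (j : Fin m) : i.val ≠ d + j.val := by omega
  simp [mulVec, dotProduct, Fin.sum_univ_succ, Fin.sum_univ_add, u1star, hlt, hne, Fin.val_inj]

lemma u1star_mulVec_succ_natAdd (j : Fin m) :
    (u1star d m x fval J *ᵥ v) (natAdd d j).succ = v (natAdd d j).succ := by
  have hne (i : Fin d) : d + j.val ≠ i.val := by omega
  simp [mulVec, dotProduct, Fin.sum_univ_succ, Fin.sum_univ_add, u1star, hne, Fin.val_inj]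

end u1star

section scaling

variable {d m k : ℕ} {c : ℝ} {w : Fin (d+m) → ℝ} {t : ℝ}

lemma gstarCK_mul_gstarT_mul_mulVec (U : Matrix (Fin (d+m+1)) (Fin (d+m+1)) ℝ)
    (v : Fin (d+m+1) → ℝ) (i : Fin (d+m+1)) :
    ((gstarCK d m k c * gstarT d m w t * U) *ᵥ v) i
      = gstarCK d m k c i i * gstarT d m w t i i * (U *ᵥ v) i := by
  rw [gstarCK, gstarT, diagonal_mul_diagonal, ← mulVec_mulVec, mulVec_diagonal,
    diagonal_apply_eq, diagonal_apply_eq]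

lemma gstarCK_mul_gstarT_zero :
    gstarCK d m k c 0 0 * gstarT d m w t 0 0 = c * Real.exp t := by
  simp [gstarCK, gstarT]

lemma gstarCK_mul_gstarT_succ_castAdd (i : Fin d) :
    gstarCK d m k c (castAdd m i).succ (castAdd m i).succ
        * gstarT d m w t (castAdd m i).succ (castAdd m i).succ
      = c ^ (-(((m : ℝ) + 1) / d)) * (k : ℝ) ^ ((m : ℝ) / d)
        * Real.exp (-(w ⟨i.val, by omega⟩) * t) := by
  simp [gstarCK, gstarT, Nat.succ_le_of_lt i.isLt]

lemma gstarCK_mul_gstarT_succ_natAdd (j : Fin m) :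
    gstarCK d m k c (natAdd d j).succ (natAdd d j).succ
        * gstarT d m w t (natAdd d j).succ (natAdd d j).succ
      = c / k * Real.exp (-(w ⟨d + j.val, by omega⟩) * t) := by
  simp [gstarCK, gstarT]

end scaling

/-- Unpacking the dynamical short-vector condition
`λ₁(g_{c,k}^⋆ g_t^⋆ u₁^⋆(x) ℤ^{n+1}) < c` into an explicit Diophantine system. -/
theorem stmt_9 (d m k : ℕ) (hk : 0 < k) (c t : ℝ) (hc0 : 0 < c)
    (w : Fin (d+m) → ℝ) (wmax : ℝ)
    (hweq : ∀ i : Fin (d+m), i.val < d → w i = wmax)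
    (x : Fin d → ℝ) (fval : Fin m → ℝ) (J : Fin d → Fin m → ℝ)
    (hshort : ∃ v : Fin (d+m+1) → ℤ, v ≠ 0 ∧ ∀ i,
      |((gstarCK d m k c) * (gstarT d m w t) * (u1star d m x fval J)).mulVec
        (fun j => (v j : ℝ)) i| < c) :
    ∃ a : Fin (d+m+1) → ℤ, a ≠ 0 ∧
      |(a 0 : ℝ) + ∑ i : Fin d, (a ⟨i.val + 1, by have := i.isLt; omega⟩ : ℝ) * x i
        + ∑ j : Fin m, (a ⟨d + j.val + 1, by have := j.isLt; omega⟩ : ℝ) * fval j|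
          ≤ Real.exp (-t) ∧
      (∀ i : Fin d, |(a ⟨i.val + 1, by have := i.isLt; omega⟩ : ℝ)
          + ∑ j : Fin m, J i j * (a ⟨d + j.val + 1, by have := j.isLt; omega⟩ : ℝ)|
        ≤ c * c ^ (((m : ℝ) + 1) / d) * (k : ℝ) ^ (-((m : ℝ) / d)) * Real.exp (wmax * t)) ∧
      (∀ j : Fin m, |(a ⟨d + j.val + 1, by have := j.isLt; omega⟩ : ℝ)|
        ≤ (k : ℝ) * Real.exp (w ⟨d + j.val, by have := j.isLt; omega⟩ * t)) := by
  obtain ⟨v, hv0, hv⟩ := hshort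
  simp only [gstarCK_mul_gstarT_mul_mulVec] at hv
  have hk_real : (0 : ℝ) < k := Nat.cast_pos.mpr hk
  refine ⟨fun i => if i.val = 0 then v i else -v i, ?_, ?_, fun i => ?_, fun j => ?_⟩
  · intro h
    refine hv0 (funext fun i => ?_)
    have hi := congrFun h i
    split_ifs at hi <;> simpa using hi
  · have h := hv 0
    rw [gstarCK_mul_gstarT_zero, u1star_mulVec_zero] at h
    refine le_of_eq_of_le ?_ ((abs_lt_div_of_abs_mul_lt (by positivity) h).le.trans_eq ?_)
    · simp [succ_castAdd_eq_mk, succ_natAdd_eq_mk, Finset.sum_neg_distrib, sub_eq_add_neg]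
    · rw [Real.exp_neg]; field_simp
  · have h := hv (castAdd m i).succ
    rw [gstarCK_mul_gstarT_succ_castAdd, u1star_mulVec_succ_castAdd, hweq _ i.isLt] at h
    refine le_of_eq_of_le ?_ ((abs_lt_div_of_abs_mul_lt (by positivity) h).le.trans_eq ?_)
    · rw [← abs_neg]
      simp [succ_castAdd_eq_mk, succ_natAdd_eq_mk, Finset.sum_neg_distrib, add_comm]
    · rw [Real.rpow_neg hc0.le, Real.rpow_neg hk_real.le, neg_mul, Real.exp_neg]; field_simp
  · have h := hv (natAdd d j).succ
    rw [gstarCK_mul_gstarT_succ_natAdd, u1star_mulVec_succ_natAdd] at h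
    refine le_of_eq_of_le ?_ ((abs_lt_div_of_abs_mul_lt (by positivity) h).le.trans_eq ?_)
    · simp [succ_natAdd_eq_mk]
    · rw [neg_mul, Real.exp_neg]; field_simp
end

section
/- Let $d\ge 1$, $\mathbf{w}$ a weight in $\mathbb{R}^d$ with $w_1\ge\dots\ge w_d>0$, $\sum w_i=1$, let $\mathfrak{m}\ge 0$ and $\theta_i:\mathbb{R}\to\mathbb{R}$ be $\mathfrak{m}$-Lipschitz functions for $1\le i\le d$. Fix $0<\beta, r_0, c, \mathfrak{q}<1$ and $n\in\mathbb{N}$. Let $\mathbf{v}=\mathbf{p}/m\in\mathbb{Q}^d$ with integer denominator $m$ satisfying $c r_0^{-1}\beta^{-(n+1)}\le m^{1+w_1}<c r_0^{-1}\beta^{-(n+2)}$ and $m\ge 3c^{-1}\beta^{-1}r_0^{-1}$. Let $R$ be a rectangle in $\mathbb{R}^d$ with side length $\frac{\mathfrak{q}r_0 c}{\mathfrak{m}\beta^{-\frac{(n+2)w_i}{1+w_1}}}$ in the $i$-th direction, containing a point $\mathbf{b}=(b_i)$, and set $\theta_i^\sharp := \theta_i(b_i)$. Then every $\mathbf{x}\in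 R$ satisfying $|x_i - \frac{p_i+\theta_i^\sharp}{m}|<\frac{\mathfrak{q}c}{m^{1+w_i}}$ for all $i$ also satisfies $|x_i-\frac{p_i+\theta_i(x_i)}{m}|<\frac{2\mathfrak{q}c}{m^{1+w_i}}$ for all $i$; conversely every $\mathbf{x}\in R$ with $|x_i-\frac{p_i+\theta_i(x_i)}{m}|<\frac{2\mathfrak{q}c}{m^{1+w_i}}$ for all $i$ satisfies $|x_i-\frac{p_i+\theta_i^\sharp}{m}|<\frac{4\mathfrak{q}c}{m^{1+w_i}}$ for all $i$. -/
/-!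
Both inclusions are the triangle inequality
`|x - (p + θ x)/m| ≤ |x - (p + θ b)/m| + |θ x - θ b|/m`, once the Lipschitz error
`|θ x - θ b|/m ≤ 𝔪 L/m` is seen to be at most `𝔮 c / m^(1+w)`. Writing `s = w / (1 + w₁)`,
the upper constraint on `m` gives `m^w ≤ (c r₀⁻¹ β^(-(n+2)))^s`, and then
`r₀ β^((n+2)s) m^w ≤ c^s r₀^(1-s) ≤ 1`.
-/

open Real

lemma abs_sub_add_div_le (x p a b m : ℝ) :
    |x - (p + a) / m| ≤ |x - (p + b) / m| + |a - b| / |m| := by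
  have split : x - (p + a) / m = (x - (p + b) / m) - (a - b) / m := by ring
  rw [split, ← abs_div]
  exact abs_sub _ _

lemma mul_rpow_le_one_of_rpow_le {m c r β W w N : ℝ} (hm : 0 ≤ m) (hc0 : 0 ≤ c) (hc1 : c ≤ 1)
    (hr0 : 0 < r) (hr1 : r ≤ 1) (hβ : 0 < β) (hw : 0 ≤ w) (hwW : w ≤ W)
    (hmW : m ^ (1 + W) ≤ c * r⁻¹ * β ^ (-N)) :
    r * β ^ (N * w / (1 + W)) * m ^ w ≤ 1 := by
  have hW : 0 < 1 + W := by linarith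
  set s := w / (1 + W) with hs
  have hs0 : 0 ≤ s := by positivity
  have hs1 : s ≤ 1 := by rw [hs, div_le_one hW]; linarith
  have hmw : m ^ w ≤ c ^ s * (r ^ s)⁻¹ * β ^ (-(N * s)) := by
    calc m ^ w = (m ^ (1 + W)) ^ s := by rw [← rpow_mul hm, hs, mul_div_cancel₀ _ hW.ne']
      _ ≤ (c * r⁻¹ * β ^ (-N)) ^ s := by gcongr
      _ = c ^ s * (r ^ s)⁻¹ * β ^ (-(N * s)) := by
        rw [mul_rpow (by positivity) (by positivity), mul_rpow hc0 (by positivity),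
          inv_rpow hr0.le, ← rpow_mul hβ.le, neg_mul]
  have hNs : N * w / (1 + W) = N * s := by rw [hs, mul_div_assoc]
  calc r * β ^ (N * w / (1 + W)) * m ^ w
      ≤ r * β ^ (N * s) * (c ^ s * (r ^ s)⁻¹ * β ^ (-(N * s))) := by rw [hNs]; gcongr
    _ = c ^ s * r ^ (1 - s) := by
        rw [rpow_neg hβ.le, rpow_sub hr0, rpow_one]
        have : 0 < β ^ (N * s) := by positivity
        have : 0 < r ^ s := by positivity
        field_simp
    _ ≤ 1 := mul_le_one₀ (rpow_le_one hc0 hc1 hs0) (by positivity)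
        (rpow_le_one hr0.le hr1 (by linarith))

lemma abs_sub_div_le_of_lipschitz {θ : ℝ → ℝ} {𝔪 𝔮 r c β E m w x b : ℝ} (h𝔪 : 0 < 𝔪)
    (h𝔮c : 0 ≤ 𝔮 * c) (hβ : 0 < β) (hm : 0 < m) (hθ : |θ x - θ b| ≤ 𝔪 * |x - b|)
    (hxb : |x - b| ≤ 𝔮 * r * c / (𝔪 * β ^ (-E))) (hscale : r * β ^ E * m ^ w ≤ 1) :
    |θ x - θ b| / m ≤ 𝔮 * c / m ^ (1 + w) := by
  have hθ' : |θ x - θ b| ≤ 𝔮 * c * (r * β ^ E) := by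
    calc |θ x - θ b| ≤ 𝔪 * (𝔮 * r * c / (𝔪 * β ^ (-E))) := hθ.trans (by gcongr)
      _ = 𝔮 * c * (r * β ^ E) := by
        rw [rpow_neg hβ.le]
        have : 0 < β ^ E := by positivity
        field_simp
  rw [div_le_div_iff₀ hm (by positivity), rpow_add hm, rpow_one]
  calc |θ x - θ b| * (m * m ^ w) ≤ 𝔮 * c * (r * β ^ E) * (m * m ^ w) := by gcongr
    _ = 𝔮 * c * m * (r * β ^ E * m ^ w) := by ring
    _ ≤ 𝔮 * c * m := mul_le_of_le_one_right (by positivity) hscale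

theorem stmt_14_general (d : ℕ) (hd : 0 < d) (w : Fin d → ℝ)
    (hwmono : ∀ i j : Fin d, i ≤ j → w j ≤ w i) (hwpos : ∀ i, 0 < w i)
    (𝔪 : ℝ) (h𝔪 : 0 < 𝔪)
    (θ : Fin d → ℝ → ℝ) (hθ : ∀ (i : Fin d) (x y : ℝ), |θ i x - θ i y| ≤ 𝔪 * |x - y|)
    (β r₀ c 𝔮 : ℝ) (hβ : β ∈ Set.Ioo (0:ℝ) 1) (hr₀ : r₀ ∈ Set.Ioo (0:ℝ) 1)
    (hc : c ∈ Set.Ioo (0:ℝ) 1) (h𝔮 : 𝔮 ∈ Set.Ioo (0:ℝ) 1)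
    (n : ℕ) (m : ℕ) (p : Fin d → ℤ) (hm1 : 1 ≤ m)
    (hmhi : (m : ℝ) ^ (1 + w ⟨0, hd⟩) < c * r₀⁻¹ * β ^ (-((n : ℝ) + 2)))
    (L : Fin d → ℝ) (hL : ∀ i, L i = 𝔮 * r₀ * c / (𝔪 * β ^ (-(((n : ℝ) + 2) * w i / (1 + w ⟨0, hd⟩)))))
    (lo : Fin d → ℝ) (R : Set (Fin d → ℝ))
    (hR : R = Set.univ.pi (fun i => Set.Icc (lo i) (lo i + L i)))
    (b : Fin d → ℝ) (hb : b ∈ R)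
    (θs : Fin d → ℝ) (hθs : ∀ i, θs i = θ i (b i)) :
    (∀ x ∈ R, (∀ i, |x i - ((p i : ℝ) + θs i) / m| < 𝔮 * c / (m : ℝ) ^ (1 + w i)) →
      ∀ i, |x i - ((p i : ℝ) + θ i (x i)) / m| < 2 * 𝔮 * c / (m : ℝ) ^ (1 + w i)) ∧
    (∀ x ∈ R, (∀ i, |x i - ((p i : ℝ) + θ i (x i)) / m| < 2 * 𝔮 * c / (m : ℝ) ^ (1 + w i)) →
      ∀ i, |x i - ((p i : ℝ) + θs i) / m| < 4 * 𝔮 * c / (m : ℝ) ^ (1 + w i)) := by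
  obtain ⟨hc0, hc1⟩ := hc
  obtain ⟨hr0, hr1⟩ := hr₀
  have hm0 : (0 : ℝ) < m := by exact_mod_cast hm1
  have h𝔮c : 0 < 𝔮 * c := mul_pos h𝔮.1 hc0
  have shift_le : ∀ x ∈ R, ∀ i,
      |θ i (x i) - θs i| / |(m : ℝ)| ≤ 𝔮 * c / (m : ℝ) ^ (1 + w i) := by
    intro x hx i
    subst hR
    have hside : |x i - b i| ≤ L i := by
      simpa [Real.dist_eq] using Real.dist_le_of_mem_Icc (hx i trivial) (hb i trivial)
    rw [hθs, abs_of_pos hm0]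
    refine abs_sub_div_le_of_lipschitz h𝔪 h𝔮c.le hβ.1 hm0 (hθ i _ _) (hL i ▸ hside) ?_
    exact mul_rpow_le_one_of_rpow_le hm0.le hc0.le hc1.le hr0 hr1.le hβ.1 (hwpos i).le
      (hwmono _ i (Nat.zero_le _)) hmhi.le
  refine ⟨fun x hx h i => ?_, fun x hx h i => ?_⟩
  · calc |x i - ((p i : ℝ) + θ i (x i)) / m|
        ≤ |x i - ((p i : ℝ) + θs i) / m| + |θ i (x i) - θs i| / |(m : ℝ)| :=
          abs_sub_add_div_le _ _ _ _ _
      _ < 𝔮 * c / (m : ℝ) ^ (1 + w i) + 𝔮 * c / (m : ℝ) ^ (1 + w i) :=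
          add_lt_add_of_lt_of_le (h i) (shift_le x hx i)
      _ = 2 * 𝔮 * c / (m : ℝ) ^ (1 + w i) := by ring
  · calc |x i - ((p i : ℝ) + θs i) / m|
        ≤ |x i - ((p i : ℝ) + θ i (x i)) / m| + |θs i - θ i (x i)| / |(m : ℝ)| :=
          abs_sub_add_div_le _ _ _ _ _
      _ < 2 * 𝔮 * c / (m : ℝ) ^ (1 + w i) + 𝔮 * c / (m : ℝ) ^ (1 + w i) :=
          add_lt_add_of_lt_of_le (h i) (abs_sub_comm (θs i) _ ▸ shift_le x hx i)
      _ ≤ 4 * 𝔮 * c / (m : ℝ) ^ (1 + w i) := by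
          rw [← add_div]
          gcongr
          linarith

/-- Comparison between the inhomogeneous dangerous set (with the Lipschitz shift evaluated
at the variable point) and its frozen version (shift evaluated at a fixed base point of a
small rectangle): on the rectangle, the frozen set is contained in the doubled true set,
and the doubled true set is contained in the quadrupled frozen set. -/
theorem stmt_14 (d : ℕ) (hd : 0 < d) (w : Fin d → ℝ)
    (hwmono : ∀ i j : Fin d, i ≤ j → w j ≤ w i) (hwpos : ∀ i, 0 < w i)
    (hwsum : ∑ i, w i = 1)
    (𝔪 : ℝ) (h𝔪 : 0 < 𝔪)
    (θ : Fin d → ℝ → ℝ) (hθ : ∀ (i : Fin d) (x y : ℝ), |θ i x - θ i y| ≤ 𝔪 * |x - y|)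
    (β r₀ c 𝔮 : ℝ) (hβ : β ∈ Set.Ioo (0:ℝ) 1) (hr₀ : r₀ ∈ Set.Ioo (0:ℝ) 1)
    (hc : c ∈ Set.Ioo (0:ℝ) 1) (h𝔮 : 𝔮 ∈ Set.Ioo (0:ℝ) 1)
    (n : ℕ) (m : ℕ) (p : Fin d → ℤ) (hm1 : 1 ≤ m)
    (hmlo : c * r₀⁻¹ * β ^ (-((n : ℝ) + 1)) ≤ (m : ℝ) ^ (1 + w ⟨0, hd⟩))
    (hmhi : (m : ℝ) ^ (1 + w ⟨0, hd⟩) < c * r₀⁻¹ * β ^ (-((n : ℝ) + 2)))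
    (hmbig : 3 * c⁻¹ * β⁻¹ * r₀⁻¹ ≤ (m : ℝ))
    (L : Fin d → ℝ) (hL : ∀ i, L i = 𝔮 * r₀ * c / (𝔪 * β ^ (-(((n : ℝ) + 2) * w i / (1 + w ⟨0, hd⟩)))))
    (lo : Fin d → ℝ) (R : Set (Fin d → ℝ))
    (hR : R = Set.univ.pi (fun i => Set.Icc (lo i) (lo i + L i)))
    (b : Fin d → ℝ) (hb : b ∈ R)
    (θs : Fin d → ℝ) (hθs : ∀ i, θs i = θ i (b i)) :
    (∀ x ∈ R, (∀ i, |x i - ((p i : ℝ) + θs i) / m| < 𝔮 * c / (m : ℝ) ^ (1 + w i)) →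
      ∀ i, |x i - ((p i : ℝ) + θ i (x i)) / m| < 2 * 𝔮 * c / (m : ℝ) ^ (1 + w i)) ∧
    (∀ x ∈ R, (∀ i, |x i - ((p i : ℝ) + θ i (x i)) / m| < 2 * 𝔮 * c / (m : ℝ) ^ (1 + w i)) →
      ∀ i, |x i - ((p i : ℝ) + θs i) / m| < 4 * 𝔮 * c / (m : ℝ) ^ (1 + w i)) :=
  stmt_14_general d hd w hwmono hwpos 𝔪 h𝔪 θ hθ β r₀ c 𝔮 hβ hr₀ hc h𝔮 n m p hm1 hmhi L hL lo R hR b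
    hb θs hθs
end

section
/- Let $d\ge 1$, $\mathbf{w}$ a weight in $\mathbb{R}^d$ with $w_1\ge\dots\ge w_d>0$ and $\sum w_i=1$, $\mathfrak{m}\ge 0$, and let each $\theta_i:\mathbb{R}\to\mathbb{R}$ be $\mathfrak{m}$-Lipschitz. Suppose $m_1>m_2\ge 1$ are integers, $\mathbf{p}_1,\mathbf{p}_2\in\mathbb{Z}^d$, $c>0$, $r_0,\beta\in(0,1)$, $n\in\mathbb{N}$, and $\mathbf{x}_1,\mathbf{x}_2\in\mathbb{R}^d$ satisfy $|x_{i,j} - \frac{p_{i,j}+\theta_i(x_{i,j})}{m_j}|<\frac{c}{m_j^{1+w_i}}$ for all $1\le i\le d$, $j=1,2$, and $|x_{i,1}-x_{i,2}|<2r_0\beta^n$ for all $i$. Then for all $1\le i\le d$, $|(m_1-m_2)x_{i,1}-(p_{i,1}-p_{i,2})| \le 2(1+\mathfrak{m})m_2 r_0\beta^n + \frac{2c}{m_2^{w_i}}$. -/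
/-- Key estimate in the separation argument: the difference of two rational
approximants with inhomogeneous Lipschitz shifts is a small solution to a homogeneous
simultaneous system. -/
theorem stmt_15 (d : ℕ) (hd : 1 ≤ d) (w : Fin d → ℝ)
    (hwmono : ∀ i j : Fin d, i ≤ j → w j ≤ w i) (hwpos : ∀ i, 0 < w i)
    (hwsum : ∑ i, w i = 1) (𝔪 : ℝ) (h𝔪 : 0 ≤ 𝔪)
    (θ : Fin d → ℝ → ℝ) (hθ : ∀ (i : Fin d) (x y : ℝ), |θ i x - θ i y| ≤ 𝔪 * |x - y|)
    (m₁ m₂ : ℕ) (hm : m₂ < m₁) (hm2 : 1 ≤ m₂)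
    (p₁ p₂ : Fin d → ℤ) (c : ℝ) (hc : 0 < c) (r₀ β : ℝ)
    (hr₀ : r₀ ∈ Set.Ioo (0:ℝ) 1) (hβ : β ∈ Set.Ioo (0:ℝ) 1) (n : ℕ)
    (x₁ x₂ : Fin d → ℝ)
    (h1 : ∀ i, |x₁ i - ((p₁ i : ℝ) + θ i (x₁ i)) / m₁| < c / (m₁ : ℝ) ^ (1 + w i))
    (h2 : ∀ i, |x₂ i - ((p₂ i : ℝ) + θ i (x₂ i)) / m₂| < c / (m₂ : ℝ) ^ (1 + w i))
    (hclose : ∀ i, |x₁ i - x₂ i| < 2 * r₀ * β ^ n) :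
    ∀ i, |((m₁ : ℝ) - m₂) * x₁ i - ((p₁ i : ℝ) - p₂ i)| ≤
      2 * (1 + 𝔪) * m₂ * r₀ * β ^ n + 2 * c / (m₂ : ℝ) ^ (w i) := by
  intro i
  have hm2pos : (0:ℝ) < m₂ := by exact_mod_cast hm2
  have hm1pos : (0:ℝ) < m₁ := by exact_mod_cast lt_trans hm2 hm
  have hm2le1 : (1:ℝ) ≤ m₂ := by exact_mod_cast hm2
  have hwnn : 0 ≤ w i := (hwpos i).le
  have hrw2 : (0:ℝ) < (m₂:ℝ) ^ (w i) := Real.rpow_pos_of_pos hm2pos _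
  have hrw1 : (0:ℝ) < (m₁:ℝ) ^ (w i) := Real.rpow_pos_of_pos hm1pos _
  -- scale the two hypotheses
  have hE1 : |(m₁:ℝ) * x₁ i - ((p₁ i : ℝ) + θ i (x₁ i))| < c / (m₁:ℝ) ^ (w i) := by
    have heq : (m₁:ℝ) * x₁ i - ((p₁ i : ℝ) + θ i (x₁ i))
        = m₁ * (x₁ i - ((p₁ i : ℝ) + θ i (x₁ i)) / m₁) := by
      field_simp
    rw [heq, abs_mul, abs_of_pos hm1pos]
    have := mul_lt_mul_of_pos_left (h1 i) hm1pos
    calc (m₁:ℝ) * |x₁ i - ((p₁ i : ℝ) + θ i (x₁ i)) / m₁|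
        < m₁ * (c / (m₁ : ℝ) ^ (1 + w i)) := this
      _ = c / (m₁:ℝ) ^ (w i) := by
          rw [Real.rpow_add hm1pos, Real.rpow_one]
          field_simp
  have hE2 : |(m₂:ℝ) * x₂ i - ((p₂ i : ℝ) + θ i (x₂ i))| < c / (m₂:ℝ) ^ (w i) := by
    have heq : (m₂:ℝ) * x₂ i - ((p₂ i : ℝ) + θ i (x₂ i))
        = m₂ * (x₂ i - ((p₂ i : ℝ) + θ i (x₂ i)) / m₂) := by
      field_simp
    rw [heq, abs_mul, abs_of_pos hm2pos]
    have := mul_lt_mul_of_pos_left (h2 i) hm2pos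
    calc (m₂:ℝ) * |x₂ i - ((p₂ i : ℝ) + θ i (x₂ i)) / m₂|
        < m₂ * (c / (m₂ : ℝ) ^ (1 + w i)) := this
      _ = c / (m₂:ℝ) ^ (w i) := by
          rw [Real.rpow_add hm2pos, Real.rpow_one]
          field_simp
  have hE1' : |(m₁:ℝ) * x₁ i - ((p₁ i : ℝ) + θ i (x₁ i))| < c / (m₂:ℝ) ^ (w i) := by
    refine hE1.trans_le ?_
    apply div_le_div_of_nonneg_left hc.le hrw2
    exact Real.rpow_le_rpow hm2pos.le (by exact_mod_cast hm.le) hwnn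
  have hC : |(m₂:ℝ) * (x₁ i - x₂ i)| ≤ m₂ * (2 * r₀ * β ^ n) := by
    rw [abs_mul, abs_of_pos hm2pos]
    exact mul_le_mul_of_nonneg_left (hclose i).le hm2pos.le
  have hD : |θ i (x₁ i) - θ i (x₂ i)| ≤ 𝔪 * (2 * r₀ * β ^ n) := by
    refine (hθ i _ _).trans ?_
    exact mul_le_mul_of_nonneg_left (hclose i).le h𝔪
  have key : ((m₁:ℝ) - m₂) * x₁ i - ((p₁ i : ℝ) - p₂ i)
      = ((m₁:ℝ) * x₁ i - ((p₁ i : ℝ) + θ i (x₁ i)))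
        - ((m₂:ℝ) * x₂ i - ((p₂ i : ℝ) + θ i (x₂ i)))
        - (m₂:ℝ) * (x₁ i - x₂ i) + (θ i (x₁ i) - θ i (x₂ i)) := by ring
  have hrβ : 0 ≤ 2 * r₀ * β ^ n := by
    have := hr₀.1; have := pow_pos hβ.1 n; nlinarith
  have hP : 𝔪 * (2 * r₀ * β ^ n) ≤ 𝔪 * m₂ * (2 * r₀ * β ^ n) := by
    apply mul_le_mul_of_nonneg_right _ hrβ
    nlinarith
  have htwo : 2 * c / (m₂:ℝ) ^ (w i) = c / (m₂:ℝ) ^ (w i) + c / (m₂:ℝ) ^ (w i) := by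
    ring
  rw [key, htwo, abs_le]
  have A1 := neg_abs_le ((m₁:ℝ) * x₁ i - ((p₁ i : ℝ) + θ i (x₁ i)))
  have A2 := le_abs_self ((m₁:ℝ) * x₁ i - ((p₁ i : ℝ) + θ i (x₁ i)))
  have B1 := neg_abs_le ((m₂:ℝ) * x₂ i - ((p₂ i : ℝ) + θ i (x₂ i)))
  have B2 := le_abs_self ((m₂:ℝ) * x₂ i - ((p₂ i : ℝ) + θ i (x₂ i)))
  have C1 := neg_abs_le ((m₂:ℝ) * (x₁ i - x₂ i))
  have C2 := le_abs_self ((m₂:ℝ) * (x₁ i - x₂ i))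
  have D1 := neg_abs_le (θ i (x₁ i) - θ i (x₂ i))
  have D2 := le_abs_self (θ i (x₁ i) - θ i (x₂ i))
  constructor <;> linarith [hE1', hE2, hC, hD, hP]
end
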